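/- arXiv:2407.04686 — 3 statements merged into one kernel-verified Lean document; each statement's English description precedes it below -/
import Mathlib

section
/- Perturbation bound for sketch-based low-rank approximation (Theorem 3.1 of the paper). Let B ∈ ℝ^{m1×m2}, Ω ∈ ℝ^{m2×s}, E1 ∈ ℝ^{m1×s}, and let B = U Σ Vᵀ be an SVD of B as in the SVD setup with k ≤ min(m1, m2), and assume rank(Ω_top) = k. Let Q ∈ ℝ^{m1×r} be any matrix with orthonormal columns whose column span equals the column span of B Ω + E1, let E2 ∈ ℝ^{r×m2}, and let T be any best rank-k approximation of Qᵀ B + E2. Then ‖B − Q T‖_F ≤ ‖E1 Ω_top†‖_F + 2 ‖E2‖_F + ( ‖Σ_bot‖_F² + ‖Σ_bot Ω_bot Ω_top†‖_F² )^{1/2}. -/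
open Matrix

/-- Frobenius norm of a real matrix. -/
noncomputable def frob {m n : ℕ} (A : Matrix (Fin m) (Fin n) ℝ) : ℝ :=
  Real.sqrt (∑ i, ∑ j, (A i j) ^ 2)

/-- Moore–Penrose pseudoinverse of a full row rank matrix: `W† = Wᵀ (W Wᵀ)⁻¹`. -/
noncomputable def pinvR {k s : ℕ} (W : Matrix (Fin k) (Fin s) ℝ) :
    Matrix (Fin s) (Fin k) ℝ :=
  Wᵀ * (W * Wᵀ)⁻¹

/-- Column span of a matrix. -/
def colSpan {m n : ℕ} (A : Matrix (Fin m) (Fin n) ℝ) : Submodule ℝ (Fin m → ℝ) :=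
  LinearMap.range A.mulVecLin

/-- `T` is a best rank-`k` approximation (in Frobenius norm) of `X`. -/
def IsBestRankApprox {a b : ℕ} (k : ℕ) (X T : Matrix (Fin a) (Fin b) ℝ) : Prop :=
  T.rank ≤ k ∧ ∀ Z : Matrix (Fin a) (Fin b) ℝ, Z.rank ≤ k → frob (X - T) ≤ frob (X - Z)

/-- Embedding of the "bottom" indices `{k, …, m-1}` (as `Fin (m - k)`) into `Fin m`. -/
def botIdx {m k : ℕ} (hk : k ≤ m) (j : Fin (m - k)) : Fin m :=
  ⟨k + j.1, by have := j.isLt; omega⟩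

attribute [local instance] Matrix.frobeniusSeminormedAddCommGroup

lemma frob_eq_norm {m n : ℕ} (A : Matrix (Fin m) (Fin n) ℝ) : frob A = ‖A‖ := by
  rw [frob, Matrix.frobenius_norm_def, Real.sqrt_eq_rpow]
  have h2 : ∀ x : ℝ, ‖x‖ ^ (2:ℝ) = x ^ 2 := fun x => by
    rw [show ((2:ℝ)) = ((2:ℕ):ℝ) by norm_num, Real.rpow_natCast, Real.norm_eq_abs, sq_abs]
  simp only [h2]

lemma frob_nonneg {m n : ℕ} (A : Matrix (Fin m) (Fin n) ℝ) : 0 ≤ frob A := Real.sqrt_nonneg _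

lemma frob_add_le {m n : ℕ} (A B : Matrix (Fin m) (Fin n) ℝ) :
    frob (A + B) ≤ frob A + frob B := by
  simp only [frob_eq_norm]; exact norm_add_le A B

lemma frob_neg {m n : ℕ} (A : Matrix (Fin m) (Fin n) ℝ) : frob (-A) = frob A := by
  simp only [frob_eq_norm]; exact norm_neg A

lemma frob_sq_eq_trace {m n : ℕ} (A : Matrix (Fin m) (Fin n) ℝ) :
    frob A ^ 2 = (Aᵀ * A).trace := by
  have h : (Aᵀ * A).trace = ∑ i, ∑ j, (A i j) ^ 2 := by
    rw [Matrix.trace]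
    simp only [Matrix.diag, Matrix.mul_apply, Matrix.transpose_apply]
    rw [Finset.sum_comm]
    congr 1; ext i; congr 1; ext j; ring
  rw [h, frob, Real.sq_sqrt]
  positivity

lemma frob_eq_sqrt_trace {m n : ℕ} (A : Matrix (Fin m) (Fin n) ℝ) :
    frob A = Real.sqrt ((Aᵀ * A).trace) := by
  rw [← frob_sq_eq_trace, Real.sqrt_sq (frob_nonneg A)]

lemma frob_pythagoras {m n : ℕ} (A B : Matrix (Fin m) (Fin n) ℝ)
    (h : (Aᵀ * B).trace = 0) :
    frob (A + B) ^ 2 = frob A ^ 2 + frob B ^ 2 := by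
  have hBA : (Bᵀ * A).trace = 0 := by
    have : (Bᵀ * A) = (Aᵀ * B)ᵀ := by rw [Matrix.transpose_mul, Matrix.transpose_transpose]
    rw [this, Matrix.trace_transpose, h]
  rw [frob_sq_eq_trace, frob_sq_eq_trace, frob_sq_eq_trace, Matrix.transpose_add,
    Matrix.add_mul, Matrix.mul_add, Matrix.mul_add, Matrix.trace_add, Matrix.trace_add,
    Matrix.trace_add, h, hBA]
  ring

lemma frob_mul_left_iso {m n p : ℕ} (N : Matrix (Fin m) (Fin n) ℝ)
    (A : Matrix (Fin n) (Fin p) ℝ) (h : Nᵀ * N = 1) : frob (N * A) = frob A := by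
  rw [frob_eq_sqrt_trace, frob_eq_sqrt_trace]
  congr 1
  rw [Matrix.transpose_mul]
  rw [show Aᵀ * Nᵀ * (N * A) = Aᵀ * (Nᵀ * N) * A by simp [Matrix.mul_assoc], h, Matrix.mul_one]

lemma frob_mul_right_iso {m n p : ℕ} (A : Matrix (Fin m) (Fin n) ℝ)
    (N : Matrix (Fin n) (Fin p) ℝ) (h : N * Nᵀ = 1) : frob (A * N) = frob A := by
  rw [frob_eq_sqrt_trace, frob_eq_sqrt_trace]
  congr 1
  rw [Matrix.transpose_mul]
  rw [show Nᵀ * Aᵀ * (A * N) = Nᵀ * (Aᵀ * A * N) by simp [Matrix.mul_assoc],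
    Matrix.trace_mul_comm, show Aᵀ * A * N * Nᵀ = Aᵀ * A * (N * Nᵀ) by simp [Matrix.mul_assoc],
    h, Matrix.mul_one]


noncomputable def Jm {m k : ℕ} (hk : k ≤ m) : Matrix (Fin m) (Fin k) ℝ :=
  fun i j => if i = Fin.castLE hk j then 1 else 0

noncomputable def Km {m k : ℕ} (hk : k ≤ m) : Matrix (Fin m) (Fin (m - k)) ℝ :=
  fun i j => if i = botIdx hk j then 1 else 0

lemma mul_Jm {m k n : ℕ} (hk : k ≤ m) (A : Matrix (Fin n) (Fin m) ℝ) :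
    A * Jm hk = A.submatrix id (Fin.castLE hk) := by
  ext i j
  simp [Matrix.mul_apply, Jm]

lemma mul_Km {m k n : ℕ} (hk : k ≤ m) (A : Matrix (Fin n) (Fin m) ℝ) :
    A * Km hk = A.submatrix id (botIdx hk) := by
  ext i j
  simp [Matrix.mul_apply, Km]

lemma Jm_tr_mul {m k n : ℕ} (hk : k ≤ m) (A : Matrix (Fin m) (Fin n) ℝ) :
    (Jm hk)ᵀ * A = A.submatrix (Fin.castLE hk) id := by
  ext i j
  simp [Matrix.mul_apply, Jm]

lemma Km_tr_mul {m k n : ℕ} (hk : k ≤ m) (A : Matrix (Fin m) (Fin n) ℝ) :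
    (Km hk)ᵀ * A = A.submatrix (botIdx hk) id := by
  ext i j
  simp [Matrix.mul_apply, Km]

lemma Jm_tr_Jm {m k : ℕ} (hk : k ≤ m) : (Jm hk)ᵀ * Jm hk = 1 := by
  rw [Jm_tr_mul]
  ext i j
  simp only [Matrix.submatrix_apply, id, Jm, Matrix.one_apply]
  by_cases h : i = j
  · subst h; simp
  · rw [if_neg h, if_neg]
    intro hc
    exact h (Fin.ext (by simpa [Fin.ext_iff] using hc))

lemma Km_tr_Km {m k : ℕ} (hk : k ≤ m) : (Km hk)ᵀ * Km hk = 1 := by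
  rw [Km_tr_mul]
  ext i j
  simp only [Matrix.submatrix_apply, id, Km, Matrix.one_apply]
  by_cases h : i = j
  · subst h; simp
  · rw [if_neg h, if_neg]
    intro hc
    have : k + (i:ℕ) = k + (j:ℕ) := by simpa [botIdx, Fin.ext_iff] using hc
    exact h (Fin.ext (by omega))

lemma Jm_tr_Km {m k : ℕ} (hk : k ≤ m) : (Jm hk)ᵀ * Km hk = 0 := by
  rw [Jm_tr_mul]
  ext i j
  simp only [Matrix.submatrix_apply, id, Km, Matrix.zero_apply]
  rw [if_neg]
  intro hc
  have : (i:ℕ) = k + (j:ℕ) := by simpa [botIdx, Fin.ext_iff] using hc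
  have := i.isLt
  omega

lemma JJt_add_KKt {m k : ℕ} (hk : k ≤ m) :
    Jm hk * (Jm hk)ᵀ + Km hk * (Km hk)ᵀ = 1 := by
  ext i j
  simp only [Matrix.add_apply, Matrix.mul_apply, Jm, Km, Matrix.transpose_apply,
    Matrix.one_apply]
  rcases lt_or_ge (i:ℕ) k with h | h
  · have hJ : ∑ a : Fin k, (if i = Fin.castLE hk a then (1:ℝ) else 0) *
        (if j = Fin.castLE hk a then 1 else 0) = if j = i then 1 else 0 := by
      rw [Finset.sum_eq_single (⟨(i:ℕ), h⟩ : Fin k)]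
      · simp [Fin.ext_iff]
      · intro b _ hb
        rw [if_neg, zero_mul]
        intro hc
        exact hb (Fin.ext (by simpa [Fin.ext_iff] using hc.symm))
      · simp
    have hK : ∑ a : Fin (m - k), (if i = botIdx hk a then (1:ℝ) else 0) *
        (if j = botIdx hk a then 1 else 0) = 0 := by
      apply Finset.sum_eq_zero
      intro b _
      rw [if_neg, zero_mul]
      intro hc
      have : (i:ℕ) = k + (b:ℕ) := by simpa [botIdx, Fin.ext_iff] using hc
      omega
    rw [hJ, hK, add_zero]
    by_cases hij : i = j
    · subst hij; simp
    · rw [if_neg (fun hc => hij (hc.symm)), if_neg hij]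
  · have hJ : ∑ a : Fin k, (if i = Fin.castLE hk a then (1:ℝ) else 0) *
        (if j = Fin.castLE hk a then 1 else 0) = 0 := by
      apply Finset.sum_eq_zero
      intro b _
      rw [if_neg, zero_mul]
      intro hc
      have hv := congrArg Fin.val hc
      simp only [Fin.coe_castLE] at hv
      have := b.isLt
      omega
    have hK : ∑ a : Fin (m - k), (if i = botIdx hk a then (1:ℝ) else 0) *
        (if j = botIdx hk a then 1 else 0) = if j = i then 1 else 0 := by
      rw [Finset.sum_eq_single (⟨(i:ℕ) - k, by have := i.isLt; omega⟩ : Fin (m - k))]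
      · have h1 : i = botIdx hk ⟨(i:ℕ) - k, by have := i.isLt; omega⟩ := by
          apply Fin.ext; simp [botIdx]; omega
        rw [if_pos h1, one_mul]
        by_cases hj : j = i
        · subst hj; rw [if_pos h1, if_pos rfl]
        · rw [if_neg, if_neg hj]
          intro hc; exact hj (hc.trans h1.symm)
      · intro b _ hb
        rw [if_neg, zero_mul]
        intro hc
        have : (i:ℕ) = k + (b:ℕ) := by simpa [botIdx, Fin.ext_iff] using hc
        exact hb (Fin.ext (by simp [Fin.ext_iff]; omega))
      · simp
    rw [hJ, hK, zero_add]
    by_cases hij : i = j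
    · subst hij; simp
    · rw [if_neg (fun hc => hij (hc.symm)), if_neg hij]

lemma Jm_mul_apply {m k n : ℕ} (hk : k ≤ m) (X : Matrix (Fin k) (Fin n) ℝ)
    (i : Fin m) (j : Fin n) :
    (Jm hk * X) i j = if h : (i:ℕ) < k then X ⟨i, h⟩ j else 0 := by
  rw [Matrix.mul_apply]
  split
  next h =>
    rw [Finset.sum_eq_single (⟨(i:ℕ), h⟩ : Fin k)]
    · rw [Jm, if_pos (Fin.ext (by simp)), one_mul]
    · intro b _ hb
      rw [Jm]; rw [if_neg, zero_mul]
      intro hc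
      exact hb (Fin.ext (by simpa [Fin.ext_iff] using hc.symm))
    · simp
  next h =>
    apply Finset.sum_eq_zero
    intro b _
    rw [Jm]; rw [if_neg, zero_mul]
    intro hc
    have hv := congrArg Fin.val hc
    simp only [Fin.coe_castLE] at hv
    have := b.isLt
    omega

lemma Km_mul_apply {m k n : ℕ} (hk : k ≤ m) (X : Matrix (Fin (m - k)) (Fin n) ℝ)
    (i : Fin m) (j : Fin n) :
    (Km hk * X) i j = if h : k ≤ (i:ℕ) then X ⟨(i:ℕ) - k, by have := i.isLt; omega⟩ j else 0 := by
  rw [Matrix.mul_apply]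
  split
  next h =>
    rw [Finset.sum_eq_single (⟨(i:ℕ) - k, by have := i.isLt; omega⟩ : Fin (m - k))]
    · rw [Km, if_pos (Fin.ext (by simp [botIdx]; omega)), one_mul]
    · intro b _ hb
      rw [Km]; rw [if_neg, zero_mul]
      intro hc
      have hv := congrArg Fin.val hc
      simp only [botIdx] at hv
      exact hb (Fin.ext (by simp; omega))
    · simp
  next h =>
    apply Finset.sum_eq_zero
    intro b _
    rw [Km]; rw [if_neg, zero_mul]
    intro hc
    have hv := congrArg Fin.val hc
    simp only [botIdx] at hv
    omega

lemma Sg_mul_Jm {m1 m2 k : ℕ} (hk1 : k ≤ m1) (hk2 : k ≤ m2)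
    (Sg : Matrix (Fin m1) (Fin m2) ℝ)
    (hSg : ∀ (i : Fin m1) (j : Fin m2), (i : ℕ) ≠ (j : ℕ) → Sg i j = 0) :
    Sg * Jm hk2 = Jm hk1 * ((Jm hk1)ᵀ * Sg * Jm hk2) := by
  rw [Jm_tr_mul, mul_Jm, mul_Jm]
  ext i j
  rw [Jm_mul_apply, Matrix.submatrix_apply, id]
  split
  next h =>
    simp only [Matrix.submatrix_apply, id]
    rfl
  next h =>
    apply hSg
    have := j.isLt
    simp only [Fin.coe_castLE]
    omega

lemma Sg_mul_Km {m1 m2 k : ℕ} (hk1 : k ≤ m1) (hk2 : k ≤ m2)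
    (Sg : Matrix (Fin m1) (Fin m2) ℝ)
    (hSg : ∀ (i : Fin m1) (j : Fin m2), (i : ℕ) ≠ (j : ℕ) → Sg i j = 0) :
    Sg * Km hk2 = Km hk1 * ((Km hk1)ᵀ * Sg * Km hk2) := by
  rw [Km_tr_mul, mul_Km, mul_Km]
  ext i j
  rw [Km_mul_apply, Matrix.submatrix_apply, id]
  split
  next h =>
    simp only [Matrix.submatrix_apply, id]
    congr 1
    apply Fin.ext
    simp [botIdx]
    omega
  next h =>
    apply hSg
    simp only [botIdx]
    omega

lemma Sg_decomp {m1 m2 k : ℕ} (hk1 : k ≤ m1) (hk2 : k ≤ m2)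
    (Sg : Matrix (Fin m1) (Fin m2) ℝ)
    (hSg : ∀ (i : Fin m1) (j : Fin m2), (i : ℕ) ≠ (j : ℕ) → Sg i j = 0) :
    Sg = Jm hk1 * ((Jm hk1)ᵀ * Sg * Jm hk2) * (Jm hk2)ᵀ
        + Km hk1 * ((Km hk1)ᵀ * Sg * Km hk2) * (Km hk2)ᵀ := by
  conv_lhs => rw [← Matrix.mul_one Sg, ← JJt_add_KKt hk2]
  rw [Matrix.mul_add, ← Matrix.mul_assoc, ← Matrix.mul_assoc,
    Sg_mul_Jm hk1 hk2 Sg hSg, Sg_mul_Km hk1 hk2 Sg hSg]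



lemma W_mul_pinvR {k s : ℕ} (W : Matrix (Fin k) (Fin s) ℝ) (hrank : W.rank = k) :
    W * pinvR W = 1 := by
  have hG : (W * Wᵀ).rank = k := by rw [Matrix.rank_self_mul_transpose, hrank]
  have hunit : IsUnit (W * Wᵀ) := by
    rw [← Matrix.mulVec_surjective_iff_isUnit]
    intro y
    have htop : LinearMap.range (W * Wᵀ).mulVecLin = ⊤ := by
      apply Submodule.eq_top_of_finrank_eq
      rw [← Matrix.rank, hG]
      simp [Module.finrank_pi]
    have : y ∈ LinearMap.range (W * Wᵀ).mulVecLin := htop ▸ Submodule.mem_top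
    obtain ⟨x, hx⟩ := this
    exact ⟨x, hx⟩
  rw [pinvR, ← Matrix.mul_assoc]
  exact Matrix.mul_nonsing_inv _ (Matrix.isUnit_iff_isUnit_det _ |>.mp hunit)

lemma QQt_mul_eq_self {m1 r n : ℕ} (Q : Matrix (Fin m1) (Fin r) ℝ)
    (Y : Matrix (Fin m1) (Fin n) ℝ) (hQ : Qᵀ * Q = 1)
    (hspan : colSpan Y ≤ colSpan Q) :
    Q * Qᵀ * Y = Y := by
  ext i j
  have hcol : (fun c => Y c j) ∈ colSpan Y := by
    refine ⟨Pi.single j 1, ?_⟩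
    ext i'
    simp [Matrix.mulVecLin, Matrix.mulVec, dotProduct, Pi.single_apply]
  obtain ⟨v, hv⟩ := hspan hcol
  have hv' : Q.mulVec v = fun c => Y c j := hv
  have key : (Q * Qᵀ).mulVec (fun c => Y c j) = fun c => Y c j := by
    rw [← hv', Matrix.mulVec_mulVec, Matrix.mul_assoc, hQ, Matrix.mul_one]
  have lhs : (Q * Qᵀ * Y) i j = (Q * Qᵀ).mulVec (fun c => Y c j) i := by
    rw [Matrix.mul_apply, Matrix.mulVec]
    rfl
  rw [lhs, key]

lemma sqrt_aux (x e b : ℝ) (hx : 0 ≤ x) (he : 0 ≤ e) (hb : 0 ≤ b) :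
    Real.sqrt (x + (2 * e + b) ^ 2) ≤ 2 * e + Real.sqrt (x + b ^ 2) := by
  have h1 : Real.sqrt (x + b ^ 2) ^ 2 = x + b ^ 2 := Real.sq_sqrt (by positivity)
  have h2 : b ≤ Real.sqrt (x + b ^ 2) := by
    have := Real.sqrt_le_sqrt (show b ^ 2 ≤ x + b ^ 2 by linarith)
    rwa [Real.sqrt_sq hb] at this
  have h3 : 0 ≤ Real.sqrt (x + b ^ 2) := Real.sqrt_nonneg _
  rw [show 2 * e + Real.sqrt (x + b ^ 2) = Real.sqrt ((2 * e + Real.sqrt (x + b ^ 2)) ^ 2) by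
    rw [Real.sqrt_sq (by positivity)]]
  apply Real.sqrt_le_sqrt
  nlinarith

lemma frob_split {m1 r n : ℕ} (Q : Matrix (Fin m1) (Fin r) ℝ) (hQ : Qᵀ * Q = 1)
    (A : Matrix (Fin m1) (Fin n) ℝ) (R : Matrix (Fin r) (Fin n) ℝ) :
    frob (A - Q * R) ^ 2 = frob (A - Q * (Qᵀ * A)) ^ 2 + frob (Qᵀ * A - R) ^ 2 := by
  have hsplit : A - Q * R = (A - Q * (Qᵀ * A)) + Q * (Qᵀ * A - R) := by
    rw [Matrix.mul_sub]; abel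
  have hz : (A - Q * (Qᵀ * A))ᵀ * Q = 0 := by
    rw [Matrix.transpose_sub, Matrix.sub_mul, Matrix.transpose_mul, Matrix.transpose_mul,
      Matrix.mul_assoc, Matrix.mul_assoc, hQ, Matrix.mul_one]
    simp
  have hcross : ((A - Q * (Qᵀ * A))ᵀ * (Q * (Qᵀ * A - R))).trace = 0 := by
    rw [← Matrix.mul_assoc, hz, Matrix.zero_mul, Matrix.trace_zero]
  rw [hsplit, frob_pythagoras _ _ hcross, frob_mul_left_iso Q _ hQ]

set_option maxHeartbeats 1000000 in
theorem stmt0 {m1 m2 s r k : ℕ} (hk1 : k ≤ m1) (hk2 : k ≤ m2)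
    (B : Matrix (Fin m1) (Fin m2) ℝ) (Ω : Matrix (Fin m2) (Fin s) ℝ)
    (E1 : Matrix (Fin m1) (Fin s) ℝ) (E2 : Matrix (Fin r) (Fin m2) ℝ)
    (U : Matrix (Fin m1) (Fin m1) ℝ) (V : Matrix (Fin m2) (Fin m2) ℝ)
    (Sg : Matrix (Fin m1) (Fin m2) ℝ)
    (hU : Uᵀ * U = 1) (hU' : U * Uᵀ = 1)
    (hV : Vᵀ * V = 1) (hV' : V * Vᵀ = 1)
    (hSg : ∀ (i : Fin m1) (j : Fin m2), (i : ℕ) ≠ (j : ℕ) → Sg i j = 0)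
    (hSVD : B = U * Sg * Vᵀ)
    (hrank : ((V.submatrix id (Fin.castLE hk2))ᵀ * Ω).rank = k)
    (Q : Matrix (Fin m1) (Fin r) ℝ) (hQ : Qᵀ * Q = 1)
    (hQspan : colSpan Q = colSpan (B * Ω + E1))
    (T : Matrix (Fin r) (Fin m2) ℝ)
    (hT : IsBestRankApprox k (Qᵀ * B + E2) T) :
    frob (B - Q * T) ≤
      frob (E1 * pinvR ((V.submatrix id (Fin.castLE hk2))ᵀ * Ω))
        + 2 * frob E2
        + Real.sqrt
            ((frob (Sg.submatrix (botIdx hk1) (botIdx hk2))) ^ 2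
              + (frob (Sg.submatrix (botIdx hk1) (botIdx hk2)
                  * ((V.submatrix id (botIdx hk2))ᵀ * Ω)
                  * pinvR ((V.submatrix id (Fin.castLE hk2))ᵀ * Ω))) ^ 2) := by
  rw [show V.submatrix id (Fin.castLE hk2) = V * Jm hk2 from (mul_Jm hk2 V).symm] at hrank ⊢
  rw [show V.submatrix id (botIdx hk2) = V * Km hk2 from (mul_Km hk2 V).symm]
  rw [show Sg.submatrix (botIdx hk1) (botIdx hk2) = (Km hk1)ᵀ * Sg * Km hk2 by
    rw [Km_tr_mul, mul_Km]; ext i j; simp]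
  set V1 := V * Jm hk2 with hV1def
  set V2 := V * Km hk2 with hV2def
  set S1 := (Jm hk1)ᵀ * Sg * Jm hk2 with hS1def
  set S2 := (Km hk1)ᵀ * Sg * Km hk2 with hS2def
  set W := V1ᵀ * Ω with hWdef
  set Wd := pinvR W with hWddef
  set Ob := V2ᵀ * Ω with hObdef
  set D := S2 * Ob * Wd with hDdef
  set Y := B * Ω + E1 with hYdef
  set M := Y * (Wd * V1ᵀ) with hMdef
  set Z := Qᵀ * M with hZdef
  -- orthogonality facts
  have hV1V1 : V1ᵀ * V1 = 1 := by
    rw [hV1def, Matrix.transpose_mul, Matrix.mul_assoc, ← Matrix.mul_assoc Vᵀ, hV,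
      Matrix.one_mul, Jm_tr_Jm]
  have hV2V2 : V2ᵀ * V2 = 1 := by
    rw [hV2def, Matrix.transpose_mul, Matrix.mul_assoc, ← Matrix.mul_assoc Vᵀ, hV,
      Matrix.one_mul, Km_tr_Km]
  have hV1V2 : V1ᵀ * V2 = 0 := by
    rw [hV1def, hV2def, Matrix.transpose_mul, Matrix.mul_assoc, ← Matrix.mul_assoc Vᵀ, hV,
      Matrix.one_mul, Jm_tr_Km]
  have hUK1 : (U * Km hk1)ᵀ * (U * Km hk1) = 1 := by
    rw [Matrix.transpose_mul, Matrix.mul_assoc, ← Matrix.mul_assoc Uᵀ, hU,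
      Matrix.one_mul, Km_tr_Km]
  -- pseudoinverse cancellation
  have hWWd : W * Wd = 1 := W_mul_pinvR W hrank
  -- B decomposition
  have hB : B = U * Jm hk1 * S1 * V1ᵀ + U * Km hk1 * S2 * V2ᵀ := by
    rw [hSVD]
    conv_lhs => rw [Sg_decomp hk1 hk2 Sg hSg]
    rw [hS1def, hS2def, hV1def, hV2def]
    simp only [Matrix.add_mul, Matrix.mul_add, Matrix.mul_assoc, Matrix.transpose_mul]
  -- cancellation key
  have key : ∀ P : Matrix (Fin m1) (Fin k) ℝ,
      P * V1ᵀ * Ω * (Wd * V1ᵀ) = P * V1ᵀ := by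
    intro P
    have h1 : P * V1ᵀ * Ω * (Wd * V1ᵀ) = P * (W * Wd * V1ᵀ) := by
      rw [hWdef]; simp only [Matrix.mul_assoc]
    rw [h1, hWWd, Matrix.one_mul]
  -- M computation
  have hM : M = U * Jm hk1 * S1 * V1ᵀ + U * Km hk1 * S2 * V2ᵀ * Ω * (Wd * V1ᵀ)
      + E1 * (Wd * V1ᵀ) := by
    rw [hMdef, hYdef, Matrix.add_mul]
    congr 1
    conv_lhs => rw [hB]
    rw [Matrix.add_mul, Matrix.add_mul, key]
  -- X computation
  have hX : B - M = U * Km hk1 * (S2 * V2ᵀ - D * V1ᵀ) - E1 * (Wd * V1ᵀ) := by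
    rw [hM]
    conv_lhs => rw [hB]
    rw [hDdef, hObdef]
    simp only [Matrix.mul_sub, Matrix.mul_assoc]
    abel
  -- bound on frob (B - M)
  have hfrobC : frob (S2 * V2ᵀ - D * V1ᵀ) ^ 2 = frob S2 ^ 2 + frob D ^ 2 := by
    have hcross : ((S2 * V2ᵀ)ᵀ * (-(D * V1ᵀ))).trace = 0 := by
      rw [Matrix.transpose_mul, Matrix.transpose_transpose, Matrix.mul_neg, Matrix.trace_neg,
        neg_eq_zero]
      rw [show V2 * S2ᵀ * (D * V1ᵀ) = V2 * (S2ᵀ * D) * V1ᵀ by simp only [Matrix.mul_assoc]]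
      rw [Matrix.trace_mul_comm, ← Matrix.mul_assoc, hV1V2]
      simp
    have := frob_pythagoras (S2 * V2ᵀ) (-(D * V1ᵀ)) hcross
    rw [← sub_eq_add_neg] at this
    rw [this, frob_neg, frob_mul_right_iso S2 V2ᵀ (by rw [Matrix.transpose_transpose, hV2V2]),
      frob_mul_right_iso D V1ᵀ (by rw [Matrix.transpose_transpose, hV1V1])]
  have hXbound : frob (B - M) ≤ frob (E1 * Wd) + Real.sqrt (frob S2 ^ 2 + frob D ^ 2) := by
    rw [hX, sub_eq_add_neg]
    calc frob (U * Km hk1 * (S2 * V2ᵀ - D * V1ᵀ) + -(E1 * (Wd * V1ᵀ)))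
        ≤ frob (U * Km hk1 * (S2 * V2ᵀ - D * V1ᵀ)) + frob (-(E1 * (Wd * V1ᵀ))) :=
          frob_add_le _ _
      _ = frob (S2 * V2ᵀ - D * V1ᵀ) + frob (E1 * Wd) := by
          rw [frob_neg, frob_mul_left_iso (U * Km hk1) _ hUK1, ← Matrix.mul_assoc,
            frob_mul_right_iso (E1 * Wd) V1ᵀ (by rw [Matrix.transpose_transpose, hV1V1])]
      _ = frob (E1 * Wd) + Real.sqrt (frob S2 ^ 2 + frob D ^ 2) := by
          rw [add_comm]
          congr 1
          rw [← hfrobC, Real.sqrt_sq (frob_nonneg _)]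
  -- projection fixes M
  have hQQM : Q * (Qᵀ * M) = M := by
    have hspan : colSpan Y ≤ colSpan Q := le_of_eq (hQspan ▸ rfl)
    have hQQY : Q * Qᵀ * Y = Y := QQt_mul_eq_self Q Y hQ hspan
    rw [hMdef, ← Matrix.mul_assoc, ← Matrix.mul_assoc, hQQY]
  -- rank of Z
  have hrankZ : Z.rank ≤ k := by
    have h1 : Z.rank ≤ (Wd * V1ᵀ).rank := by
      rw [hZdef, hMdef]
      exact le_trans (Matrix.rank_mul_le_right _ _) (Matrix.rank_mul_le_right _ _)
    have h2 : (Wd * V1ᵀ).rank ≤ V1ᵀ.rank := Matrix.rank_mul_le_right _ _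
    exact le_trans h1 (le_trans h2 (Matrix.rank_le_height _))
  -- Pythagoras identities
  have pyth1 : frob (B - Q * T) ^ 2
      = frob (B - Q * (Qᵀ * B)) ^ 2 + frob (Qᵀ * B - T) ^ 2 := frob_split Q hQ B T
  have pyth2 : frob (B - M) ^ 2
      = frob (B - M - Q * (Qᵀ * (B - M))) ^ 2 + frob (Qᵀ * (B - M)) ^ 2 := by
    have := frob_split Q hQ (B - M) 0
    rwa [Matrix.mul_zero, sub_zero, sub_zero] at this
  have hG1eq : B - Q * (Qᵀ * B) = B - M - Q * (Qᵀ * (B - M)) := by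
    rw [Matrix.mul_sub, Matrix.mul_sub, hQQM]
    abel
  -- the T chain
  have hQZ : Qᵀ * B - Z = Qᵀ * (B - M) := by rw [hZdef, Matrix.mul_sub]
  have ht : frob (Qᵀ * B - T) ≤ 2 * frob E2 + frob (Qᵀ * (B - M)) := by
    have h1 : frob (Qᵀ * B - T) ≤ frob (Qᵀ * B + E2 - T) + frob E2 := by
      have : Qᵀ * B - T = (Qᵀ * B + E2 - T) + -E2 := by abel
      rw [this]
      calc frob ((Qᵀ * B + E2 - T) + -E2) ≤ frob (Qᵀ * B + E2 - T) + frob (-E2) :=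
            frob_add_le _ _
        _ = frob (Qᵀ * B + E2 - T) + frob E2 := by rw [frob_neg]
    have h2 : frob (Qᵀ * B + E2 - T) ≤ frob (Qᵀ * B + E2 - Z) := hT.2 Z hrankZ
    have h3 : frob (Qᵀ * B + E2 - Z) ≤ frob (Qᵀ * B - Z) + frob E2 := by
      have : Qᵀ * B + E2 - Z = (Qᵀ * B - Z) + E2 := by abel
      rw [this]
      exact frob_add_le _ _
    rw [hQZ] at h3
    linarith
  -- final assembly
  set a := frob (B - M - Q * (Qᵀ * (B - M))) with hadef
  set b := frob (Qᵀ * (B - M)) with hbdef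
  set e := frob E2 with hedef
  have he : 0 ≤ e := frob_nonneg _
  have hb : 0 ≤ b := frob_nonneg _
  have ha : 0 ≤ a := frob_nonneg _
  have ht' : frob (Qᵀ * B - T) ^ 2 ≤ (2 * e + b) ^ 2 := by
    have h0 : 0 ≤ frob (Qᵀ * B - T) := frob_nonneg _
    nlinarith [ht]
  have step1 : frob (B - Q * T) ≤ Real.sqrt (a ^ 2 + (2 * e + b) ^ 2) := by
    rw [show frob (B - Q * T) = Real.sqrt (frob (B - Q * T) ^ 2) from
      (Real.sqrt_sq (frob_nonneg _)).symm]
    apply Real.sqrt_le_sqrt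
    rw [pyth1, hG1eq, ← hadef]
    linarith [ht']
  have step2 : Real.sqrt (a ^ 2 + (2 * e + b) ^ 2) ≤ 2 * e + Real.sqrt (a ^ 2 + b ^ 2) :=
    sqrt_aux (a ^ 2) e b (by positivity) he hb
  have step3 : Real.sqrt (a ^ 2 + b ^ 2) = frob (B - M) := by
    rw [← pyth2, Real.sqrt_sq (frob_nonneg _)]
  have final : frob (B - Q * T) ≤ 2 * e + frob (B - M) := by
    rw [← step3]
    exact le_trans step1 step2
  calc frob (B - Q * T) ≤ 2 * e + frob (B - M) := final
    _ ≤ 2 * e + (frob (E1 * Wd) + Real.sqrt (frob S2 ^ 2 + frob D ^ 2)) := by linarith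
    _ = frob (E1 * Wd) + 2 * e + Real.sqrt (frob S2 ^ 2 + frob D ^ 2) := by ring
end

section
/- Projection error bound for the perturbed range (equation (5.9) in the paper). Let B ∈ ℝ^{m1×m2}, Ω ∈ ℝ^{m2×s}, E1 ∈ ℝ^{m1×s}, with SVD setup for B and k ≤ min(m1, m2), and assume rank(Ω_top) = k. Let Q ∈ ℝ^{m1×r} be any matrix with orthonormal columns whose column span equals the column span of B Ω + E1. Then ‖B − Q Qᵀ B‖_F² ≤ 2 ( ‖E1 Ω_top†‖_F² + ‖Σ_bot‖_F² + ‖Σ_bot Ω_bot Ω_top†‖_F² ). -/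
open Matrix

/-! ### Auxiliary lemmas -/

noncomputable def fsq {m n : ℕ} (A : Matrix (Fin m) (Fin n) ℝ) : ℝ := ∑ i, ∑ j, (A i j)^2

lemma fsq_nonneg {m n : ℕ} (A : Matrix (Fin m) (Fin n) ℝ) : 0 ≤ fsq A := by
  apply Finset.sum_nonneg; intro i _; apply Finset.sum_nonneg; intro j _; positivity

lemma frob_sq {m n : ℕ} (A : Matrix (Fin m) (Fin n) ℝ) : frob A ^ 2 = fsq A := by
  rw [frob]; exact Real.sq_sqrt (fsq_nonneg A)

lemma fsq_eq_trace {m n : ℕ} (A : Matrix (Fin m) (Fin n) ℝ) : fsq A = Matrix.trace (Aᵀ * A) := by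
  simp only [fsq, Matrix.trace, Matrix.diag, Matrix.mul_apply, transpose_apply, sq]
  rw [Finset.sum_comm]

lemma fsq_mul_left {m n : ℕ} (U : Matrix (Fin m) (Fin m) ℝ) (hU : Uᵀ*U = 1)
    (A : Matrix (Fin m) (Fin n) ℝ) : fsq (U*A) = fsq A := by
  rw [fsq_eq_trace, fsq_eq_trace, transpose_mul, Matrix.mul_assoc,
    ← Matrix.mul_assoc Uᵀ U A, hU, Matrix.one_mul]

lemma fsq_mul_right {m n p : ℕ} (A : Matrix (Fin m) (Fin n) ℝ) (W : Matrix (Fin n) (Fin p) ℝ)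
    (hW : W * Wᵀ = 1) : fsq (A*W) = fsq A := by
  rw [fsq_eq_trace, fsq_eq_trace, transpose_mul, Matrix.mul_assoc, Matrix.trace_mul_comm,
    Matrix.mul_assoc, Matrix.mul_assoc, hW, Matrix.mul_one]

lemma fsq_neg {m n : ℕ} (A : Matrix (Fin m) (Fin n) ℝ) : fsq (-A) = fsq A := by
  simp [fsq]

lemma fsq_proj_le {m n r : ℕ} (Q : Matrix (Fin m) (Fin r) ℝ) (hQ : Qᵀ*Q = 1)
    (M : Matrix (Fin m) (Fin n) ℝ) : fsq (M - Q*(Qᵀ*M)) ≤ fsq M := by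
  have hQ' : ∀ {p : ℕ} (X : Matrix (Fin r) (Fin p) ℝ), Qᵀ*(Q*X) = X := fun X => by
    rw [← Matrix.mul_assoc, hQ, Matrix.one_mul]
  have key : (M - Q*(Qᵀ*M))ᵀ * (M - Q*(Qᵀ*M)) = Mᵀ*M - (Qᵀ*M)ᵀ*(Qᵀ*M) := by
    simp only [transpose_sub, transpose_mul, transpose_transpose, Matrix.sub_mul,
      Matrix.mul_sub, Matrix.mul_assoc, hQ']
    abel
  have h2 := fsq_nonneg (Qᵀ*M)
  rw [fsq_eq_trace, key, Matrix.trace_sub, ← fsq_eq_trace, ← fsq_eq_trace]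
  linarith

lemma fsq_add_le {m n : ℕ} (A B : Matrix (Fin m) (Fin n) ℝ) :
    fsq (A + B) ≤ 2 * fsq A + 2 * fsq B := by
  have h : ∀ i, ∑ j, (A i j + B i j)^2 ≤ ∑ j, (2*(A i j)^2 + 2*(B i j)^2) := by
    intro i; apply Finset.sum_le_sum; intro j _; nlinarith [sq_nonneg (A i j - B i j)]
  calc fsq (A+B) = ∑ i, ∑ j, (A i j + B i j)^2 := by simp [fsq]
    _ ≤ ∑ i, ∑ j, (2*(A i j)^2 + 2*(B i j)^2) := Finset.sum_le_sum (fun i _ => h i)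
    _ = 2 * fsq A + 2 * fsq B := by
        simp [fsq, Finset.sum_add_distrib, Finset.mul_sum]

lemma sum_split {m k : ℕ} (hk : k ≤ m) (f : Fin m → ℝ) :
    ∑ j, f j = (∑ a : Fin k, f (Fin.castLE hk a)) + ∑ b : Fin (m-k), f (botIdx hk b) := by
  rw [← Equiv.sum_comp (finSumFinEquiv.trans (finCongr (show k+(m-k)=m by omega))) f,
    Fintype.sum_sum_type]
  simp only [Equiv.trans_apply, finSumFinEquiv_apply_left, finSumFinEquiv_apply_right]
  congr 1

lemma isUnit_det_of_rank_eq {k : ℕ} (G : Matrix (Fin k) (Fin k) ℝ) (h : G.rank = k) :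
    IsUnit G.det := by
  rw [← Matrix.isUnit_iff_isUnit_det, ← Matrix.mulVec_surjective_iff_isUnit]
  have htop : LinearMap.range G.mulVecLin = ⊤ := by
    apply Submodule.eq_top_of_finrank_eq
    rw [← Matrix.rank, h, Module.finrank_fintype_fun_eq_card, Fintype.card_fin]
  intro v
  obtain ⟨c, hc⟩ := LinearMap.range_eq_top.mp htop v
  exact ⟨c, hc⟩

theorem stmt9 {m1 m2 s r k : ℕ} (hk1 : k ≤ m1) (hk2 : k ≤ m2)
    (B : Matrix (Fin m1) (Fin m2) ℝ) (Ω : Matrix (Fin m2) (Fin s) ℝ)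
    (E1 : Matrix (Fin m1) (Fin s) ℝ)
    (U : Matrix (Fin m1) (Fin m1) ℝ) (V : Matrix (Fin m2) (Fin m2) ℝ)
    (Sg : Matrix (Fin m1) (Fin m2) ℝ)
    (hU : Uᵀ * U = 1) (hU' : U * Uᵀ = 1)
    (hV : Vᵀ * V = 1) (hV' : V * Vᵀ = 1)
    (hSg : ∀ (i : Fin m1) (j : Fin m2), (i : ℕ) ≠ (j : ℕ) → Sg i j = 0)
    (hSVD : B = U * Sg * Vᵀ)
    (hrank : ((V.submatrix id (Fin.castLE hk2))ᵀ * Ω).rank = k)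
    (Q : Matrix (Fin m1) (Fin r) ℝ) (hQ : Qᵀ * Q = 1)
    (hQspan : colSpan Q = colSpan (B * Ω + E1)) :
    (frob (B - Q * (Qᵀ * B))) ^ 2 ≤
      2 * ((frob (E1 * pinvR ((V.submatrix id (Fin.castLE hk2))ᵀ * Ω))) ^ 2
        + (frob (Sg.submatrix (botIdx hk1) (botIdx hk2))) ^ 2
        + (frob (Sg.submatrix (botIdx hk1) (botIdx hk2)
            * ((V.submatrix id (botIdx hk2))ᵀ * Ω)
            * pinvR ((V.submatrix id (Fin.castLE hk2))ᵀ * Ω))) ^ 2) := by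
  set Vt : Matrix (Fin m2) (Fin k) ℝ := V.submatrix id (Fin.castLE hk2) with hVtdef
  set Vb : Matrix (Fin m2) (Fin (m2-k)) ℝ := V.submatrix id (botIdx hk2) with hVbdef
  set Ωt : Matrix (Fin k) (Fin s) ℝ := Vtᵀ * Ω with hΩtdef
  set F : Matrix (Fin s) (Fin k) ℝ := pinvR Ωt with hFdef
  set Sb : Matrix (Fin (m1-k)) (Fin (m2-k)) ℝ := Sg.submatrix (botIdx hk1) (botIdx hk2) with hSbdef
  set Y : Matrix (Fin m1) (Fin s) ℝ := B * Ω + E1 with hYdef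
  -- pseudoinverse identity
  have hdet : IsUnit (Ωt * Ωtᵀ).det := by
    apply isUnit_det_of_rank_eq
    rw [Matrix.rank_self_mul_transpose]
    exact hrank
  have hΩF : Ωt * F = 1 := by
    rw [hFdef, pinvR, ← Matrix.mul_assoc, Matrix.mul_nonsing_inv _ hdet]
  -- projection absorbs Y
  have hQY : Q * (Qᵀ * Y) = Y := by
    ext i j
    have hcol : (fun i' => Y i' j) ∈ colSpan Y := by
      refine ⟨Pi.single j 1, ?_⟩
      rw [Matrix.mulVecLin_apply, Matrix.mulVec_single]
      funext i'; simp
    rw [← hQspan] at hcol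
    obtain ⟨c, hc⟩ := hcol
    rw [Matrix.mulVecLin_apply] at hc
    have key : Q.mulVec (Qᵀ.mulVec (Q.mulVec c)) = Q.mulVec c := by
      rw [Matrix.mulVec_mulVec, Matrix.mulVec_mulVec, Matrix.mul_assoc, hQ, Matrix.mul_one]
    have h1 : (Q*(Qᵀ*Y)) i j = Q.mulVec (Qᵀ.mulVec (fun l => Y l j)) i := by
      simp [Matrix.mul_apply, Matrix.mulVec, dotProduct]
    rw [h1, show (fun l => Y l j) = Q.mulVec c from funext fun l => (congrFun hc l).symm, key]
    exact congrFun hc i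
  -- step 1 : replace B - QQᵀB by D - QQᵀD with D = B - Y (F Vtᵀ)
  set D : Matrix (Fin m1) (Fin m2) ℝ := B - Y * (F * Vtᵀ) with hDdef
  have hstep1 : B - Q * (Qᵀ * B) = D - Q * (Qᵀ * D) := by
    have h1 : Q*(Qᵀ*(Y*(F*Vtᵀ))) = Y*(F*Vtᵀ) := by
      rw [← Matrix.mul_assoc Qᵀ, ← Matrix.mul_assoc Q, hQY]
    rw [hDdef, Matrix.mul_sub, Matrix.mul_sub, h1]
    abel
  have bound1 : fsq (B - Q * (Qᵀ * B)) ≤ fsq D := by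
    rw [hstep1]; exact fsq_proj_le Q hQ D
  -- step 2 : split D
  have hVt1 : Vtᵀ * Vt = 1 := by
    ext a b
    have h := congrFun (congrFun hV (Fin.castLE hk2 a)) (Fin.castLE hk2 b)
    have h2 : (Vtᵀ * Vt) a b = (Vᵀ * V) (Fin.castLE hk2 a) (Fin.castLE hk2 b) := by
      simp [Matrix.mul_apply, hVtdef]
    rw [h2, h, Matrix.one_apply, Matrix.one_apply]
    by_cases hab : a = b
    · simp [hab]
    · rw [if_neg hab, if_neg (fun hc => hab (by exact Fin.ext (by simpa [Fin.ext_iff] using hc)))]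
  have hD2 : D = (B - B*Ω*(F*Vtᵀ)) + (-(E1*F))*Vtᵀ := by
    rw [hDdef, hYdef, Matrix.add_mul]
    rw [show E1 * (F * Vtᵀ) = (E1*F)*Vtᵀ from (Matrix.mul_assoc _ _ _).symm]
    rw [Matrix.neg_mul]
    abel
  have bound2 : fsq D ≤ 2 * fsq (B - B*Ω*(F*Vtᵀ)) + 2 * fsq (E1*F) := by
    calc fsq D ≤ 2 * fsq (B - B*Ω*(F*Vtᵀ)) + 2 * fsq ((-(E1*F))*Vtᵀ) := by
          rw [hD2]; exact fsq_add_le _ _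
      _ = 2 * fsq (B - B*Ω*(F*Vtᵀ)) + 2 * fsq (E1*F) := by
          rw [fsq_mul_right _ _ (by rw [transpose_transpose]; exact hVt1), fsq_neg]
  -- step 3 : compute fsq (B - BΩFVtᵀ)
  set R : Matrix (Fin m2) (Fin k) ℝ := (Vᵀ*Ω)*F with hRdef
  set T : Matrix (Fin m1) (Fin k) ℝ := Sg * R with hTdef
  set N : Matrix (Fin m1) (Fin m2) ℝ := Sg - T * (Vtᵀ*V) with hNdef
  have hBX : B - B*Ω*(F*Vtᵀ) = U * (N * Vᵀ) := by
    rw [hNdef, hTdef, hRdef, hSVD]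
    simp only [Matrix.mul_sub, Matrix.sub_mul, Matrix.mul_assoc, hV', Matrix.mul_one]
  have hfsqBX : fsq (B - B*Ω*(F*Vtᵀ)) = fsq N := by
    rw [hBX, fsq_mul_left U hU, fsq_mul_right _ _ (by rw [transpose_transpose]; exact hV)]
  -- entry computations
  have hJ : ∀ (x : Fin k) (j : Fin m2), (Vtᵀ*V) x j = if (j:ℕ) = (x:ℕ) then 1 else 0 := by
    intro x j
    have h := congrFun (congrFun hV (Fin.castLE hk2 x)) j
    have h2 : (Vtᵀ*V) x j = (Vᵀ*V) (Fin.castLE hk2 x) j := by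
      simp [Matrix.mul_apply, hVtdef]
    rw [h2, h, Matrix.one_apply]
    by_cases hc : (j:ℕ) = (x:ℕ)
    · rw [if_pos (Fin.ext (by simpa using hc.symm)), if_pos hc]
    · rw [if_neg (fun he => hc (by simpa [Fin.ext_iff] using he.symm)), if_neg hc]
  have hRtop : ∀ (a : Fin k) (c : Fin k),
      R (Fin.castLE hk2 a) c = (1 : Matrix (Fin k) (Fin k) ℝ) a c := by
    intro a c; rw [← hΩF]; rfl
  have hRbot : ∀ (b : Fin (m2-k)) (c : Fin k), R (botIdx hk2 b) c = ((Vbᵀ*Ω)*F) b c :=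
    fun _ _ => rfl
  have hTtop : ∀ (i0 : Fin k) (c : Fin k),
      T (Fin.castLE hk1 i0) c = Sg (Fin.castLE hk1 i0) (Fin.castLE hk2 c) := by
    intro i0 c
    rw [hTdef, Matrix.mul_apply, sum_split hk2]
    have h1 : ∑ b, Sg (Fin.castLE hk1 i0) (botIdx hk2 b) * R (botIdx hk2 b) c = 0 :=
      Finset.sum_eq_zero fun b _ => by
        rw [hSg _ _ (by simp [botIdx]; omega), zero_mul]
    rw [h1, add_zero]
    rw [Finset.sum_congr rfl (fun a _ => by rw [hRtop])]
    rw [Finset.sum_eq_single c (fun a _ ha => by rw [Matrix.one_apply, if_neg ha, mul_zero])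
      (fun h => absurd (Finset.mem_univ c) h)]
    rw [Matrix.one_apply, if_pos rfl, mul_one]
  have hTbot : ∀ (p : Fin (m1-k)) (c : Fin k),
      T (botIdx hk1 p) c = (Sb * ((Vbᵀ*Ω)*F)) p c := by
    intro p c
    rw [hTdef, Matrix.mul_apply, sum_split hk2]
    have h0 : ∑ a : Fin k, Sg (botIdx hk1 p) (Fin.castLE hk2 a) * R (Fin.castLE hk2 a) c = 0 :=
      Finset.sum_eq_zero fun a _ => by
        rw [hSg _ _ (by simp [botIdx]; omega), zero_mul]
    rw [h0, zero_add, Matrix.mul_apply]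
    exact Finset.sum_congr rfl fun b _ => by rw [hRbot]; rfl
  have hTJ : ∀ (i : Fin m1) (a : Fin k),
      (T * (Vtᵀ*V)) i (Fin.castLE hk2 a) = T i a := by
    intro i a
    rw [Matrix.mul_apply]
    rw [Finset.sum_eq_single a
      (fun x _ hx => by
        rw [hJ, if_neg (by simp only [Fin.coe_castLE]; exact fun h => hx (Fin.ext h.symm)),
          mul_zero])
      (fun h => absurd (Finset.mem_univ a) h)]
    rw [hJ, if_pos (by simp), mul_one]
  have hNbot : ∀ (i : Fin m1) (b : Fin (m2-k)), N i (botIdx hk2 b) = Sg i (botIdx hk2 b) := by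
    intro i b
    rw [hNdef, Matrix.sub_apply, Matrix.mul_apply]
    rw [Finset.sum_eq_zero (fun x _ => by
      rw [hJ, if_neg (by simp [botIdx]; omega), mul_zero])]
    ring
  have hNtt : ∀ (i0 : Fin k) (a : Fin k),
      N (Fin.castLE hk1 i0) (Fin.castLE hk2 a) = 0 := by
    intro i0 a
    rw [hNdef, Matrix.sub_apply, hTJ, hTtop, sub_self]
  have hNbt : ∀ (p : Fin (m1-k)) (a : Fin k),
      N (botIdx hk1 p) (Fin.castLE hk2 a) = -((Sb * ((Vbᵀ*Ω)*F)) p a) := by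
    intro p a
    rw [hNdef, Matrix.sub_apply, hTJ, hTbot, hSg _ _ (by simp [botIdx]; omega), zero_sub]
  -- the Frobenius computation
  have hfsqN : fsq N = fsq (Sb*((Vbᵀ*Ω)*F)) + fsq Sb := by
    have inner : ∀ i : Fin m1, ∑ j, (N i j)^2 =
        (∑ a : Fin k, (N i (Fin.castLE hk2 a))^2) + ∑ b, (N i (botIdx hk2 b))^2 :=
      fun i => sum_split hk2 _
    have step : fsq N = (∑ i, ∑ a : Fin k, (N i (Fin.castLE hk2 a))^2)
        + ∑ i, ∑ b, (N i (botIdx hk2 b))^2 := by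
      rw [fsq, Finset.sum_congr rfl (fun i _ => inner i), Finset.sum_add_distrib]
    rw [step]
    have hleft : (∑ i, ∑ a : Fin k, (N i (Fin.castLE hk2 a))^2) = fsq (Sb*((Vbᵀ*Ω)*F)) := by
      rw [sum_split hk1 (fun i => ∑ a : Fin k, (N i (Fin.castLE hk2 a))^2)]
      have hz : ∑ i0 : Fin k, ∑ a : Fin k, (N (Fin.castLE hk1 i0) (Fin.castLE hk2 a))^2 = 0 :=
        Finset.sum_eq_zero fun i0 _ => Finset.sum_eq_zero fun a _ => by rw [hNtt]; ring
      rw [hz, zero_add, fsq]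
      exact Finset.sum_congr rfl fun p _ => Finset.sum_congr rfl fun a _ => by
        rw [hNbt]; ring
    have hright : (∑ i, ∑ b, (N i (botIdx hk2 b))^2) = fsq Sb := by
      rw [sum_split hk1 (fun i => ∑ b, (N i (botIdx hk2 b))^2)]
      have hz : ∑ i0 : Fin k, ∑ b, (N (Fin.castLE hk1 i0) (botIdx hk2 b))^2 = 0 :=
        Finset.sum_eq_zero fun i0 _ => Finset.sum_eq_zero fun b _ => by
          rw [hNbot, hSg _ _ (by simp [botIdx]; omega)]; ring
      rw [hz, zero_add, fsq]
      exact Finset.sum_congr rfl fun p _ => Finset.sum_congr rfl fun b _ => by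
        rw [hNbot]; rfl
    rw [hleft, hright]
  -- assemble
  rw [frob_sq, frob_sq, frob_sq, frob_sq]
  have hassoc : Sb * (Vbᵀ * Ω) * F = Sb * ((Vbᵀ*Ω)*F) := Matrix.mul_assoc _ _ _
  rw [hassoc]
  have := bound1
  have := bound2
  rw [hfsqBX, hfsqN] at bound2
  linarith
end

section
/- Reduction from block-diagonal approximation to HODLR approximation (the key inequality in the proof of Theorem 6.3 of the paper). Let A and H̃ be real m×n matrices, let S be a real m×n matrix with every entry equal to 0 or 1, let S̄ be the entrywise complement of S (S̄_{i,j} = 1 − S_{i,j}), let ε ≥ 0 and r ≥ 0 be real numbers, and set B* = A ∘ S (the entrywise/Hadamard product). Assume: (i) ‖A − H̃‖_F ≤ (1 + ε) · r; (ii) ‖(A − H̃) ∘ S̄‖_F² ≥ r²; (iii) r ≤ ‖A − B*‖_F. Then ‖A − H̃ ∘ S‖_F ≤ (1 + ε) · ‖A − B*‖_F. -/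
open Matrix

/-- Entrywise (Hadamard) product of two matrices. -/
def had {m n : ℕ} (X Y : Matrix (Fin m) (Fin n) ℝ) : Matrix (Fin m) (Fin n) ℝ :=
  Matrix.of fun i j => X i j * Y i j

theorem stmt12 {m n : ℕ} (A Ht S Sbar : Matrix (Fin m) (Fin n) ℝ)
    (hS : ∀ i j, S i j = 0 ∨ S i j = 1)
    (hSbar : ∀ i j, Sbar i j = 1 - S i j)
    (ε r : ℝ) (hε : 0 ≤ ε) (hr : 0 ≤ r)
    (h1 : frob (A - Ht) ≤ (1 + ε) * r)
    (h2 : (frob (had (A - Ht) Sbar)) ^ 2 ≥ r ^ 2)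
    (h3 : r ≤ frob (A - had A S)) :
    frob (A - had Ht S) ≤ (1 + ε) * frob (A - had A S) := by
  set W := ∑ i, ∑ j, ((A - had Ht S) i j) ^ 2 with hW
  set Y := ∑ i, ∑ j, ((had (A - Ht) Sbar) i j) ^ 2 with hY
  set F := ∑ i, ∑ j, ((A - Ht) i j) ^ 2 with hF
  set Z := ∑ i, ∑ j, ((A - had A S) i j) ^ 2 with hZ
  have hWnn : 0 ≤ W := Finset.sum_nonneg fun i _ => Finset.sum_nonneg fun j _ => sq_nonneg _
  have hYnn : 0 ≤ Y := Finset.sum_nonneg fun i _ => Finset.sum_nonneg fun j _ => sq_nonneg _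
  have hFnn : 0 ≤ F := Finset.sum_nonneg fun i _ => Finset.sum_nonneg fun j _ => sq_nonneg _
  have hZnn : 0 ≤ Z := Finset.sum_nonneg fun i _ => Finset.sum_nonneg fun j _ => sq_nonneg _
  have key : W + Y = F + Z := by
    rw [hW, hY, hF, hZ, ← Finset.sum_add_distrib, ← Finset.sum_add_distrib]
    refine Finset.sum_congr rfl fun i _ => ?_
    rw [← Finset.sum_add_distrib, ← Finset.sum_add_distrib]
    refine Finset.sum_congr rfl fun j _ => ?_
    rcases hS i j with h | h <;>
      simp [had, Matrix.sub_apply, hSbar i j, h] <;> ring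
  have hFle : F ≤ ((1 + ε) * r) ^ 2 := by
    have := Real.sqrt_le_sqrt (le_of_eq (Real.sq_sqrt hFnn).symm)
    calc F = Real.sqrt F ^ 2 := (Real.sq_sqrt hFnn).symm
    _ ≤ ((1 + ε) * r) ^ 2 := by
        apply pow_le_pow_left₀ (Real.sqrt_nonneg _) h1
  have hYge : r ^ 2 ≤ Y := by
    have := h2
    rwa [frob, Real.sq_sqrt hYnn] at this
  have hZge : r ^ 2 ≤ Z := by
    have h3' : r ^ 2 ≤ Real.sqrt Z ^ 2 :=
      pow_le_pow_left₀ hr h3 2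
    rwa [Real.sq_sqrt hZnn] at h3'
  have hWle : W ≤ ((1 + ε) * Real.sqrt Z) ^ 2 := by
    have hsz : Real.sqrt Z ^ 2 = Z := Real.sq_sqrt hZnn
    nlinarith [sq_nonneg ε, sq_nonneg (1 + ε)]
  calc frob (A - had Ht S) = Real.sqrt W := rfl
    _ ≤ Real.sqrt (((1 + ε) * Real.sqrt Z) ^ 2) := Real.sqrt_le_sqrt hWle
    _ = (1 + ε) * Real.sqrt Z := Real.sqrt_sq (by positivity)
    _ = (1 + ε) * frob (A - had A S) := rfl
end
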